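/- Let Ω ⊂ ℝ^d (d ≥ 1) be a bounded domain, p ∈ (0,1), ε > 0, β > 0, α ≥ 0, r > 0 and u, g ∈ L²(Ω). Define φ_ε(w) = β∫_Ω ψ_ε(w(x)²) dx + (α/2)‖w‖²_{L²}. Let v be any global minimizer over L²(Ω) of w ↦ (1/(2r))‖w − (u − r·g)‖²_{L²} + φ_ε(w), and let w* be the unique global minimizer over L²(Ω) of w ↦ (1/(2r))‖w − (u − r·g)‖²_{L²} + β∫_Ω [ψ_ε(u(x)²) + ψ_ε'(u(x)²)(w(x)² − u(x)²)] dx + (α/2)‖w‖²_{L²}. Then (g, v − u)_{L²} + φ_ε(v) − φ_ε(u) ≤ −(1/(2r))‖v − u‖²_{L²} ≤ −(1/(2r(4 + 2/p)²))‖w* − u‖²_{L²}. -/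

import Mathlib

open MeasureTheory Filter Topology RealInnerProductSpace
open scoped ENNReal

/-!
The first inequality is the expansion of `‖v - (u - r g)‖²` when `v` is compared with `u`.

For the second, both functionals are integrals of pointwise integrands, so a minimizer minimizes
its integrand almost everywhere. As `ψ_ε` is concave, its linearization at a point `a` lies above
it and touches it at `a`. Hence, with `q = (u - r g)(x)`, both `y = v(x)` (taking `a = v(x)`) and
`y = w*(x)` (whose integrand is the linearization at `a = u(x)`) solve
`y (1/(2r) + α/2 + β ψ_ε'(a²)) = q/(2r)`. Write `ψ_ε'(a²) = (p/2) m^(p-2)` with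
`m = max(|a|, ε)`. Because `m^(p-2) m² = m^p` increases with `m`, the two solutions differ by at
most `3 |m_v - m_u|` unless `m_u > 2 m_v`; in that case, comparing `v(x)` with `w*(x)` in the
minimality of `v` gives `p (w*(x) - v(x)) ≤ m_u ≤ 2 (m_u - m_v)`. Since
`|m_v - m_u| ≤ |v(x) - u(x)|`, the triangle inequality gives
`|w*(x) - u(x)| ≤ (4 + 2/p) |v(x) - u(x)|` pointwise, hence in `L²`.
-/

/-- The smooth approximation `ψ_ε` of `t ↦ t^{p/2}`:
`ψ_ε(t) = (p/2)·t/ε^{2−p} + (1 − p/2)·ε^p` for `0 ≤ t < ε²` and `ψ_ε(t) = t^{p/2}` for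
`t ≥ ε²` (so `ψ_0(t) = t^{p/2}`). Exponents are real powers. -/
noncomputable def psi (p ε t : ℝ) : ℝ :=
  if t < ε ^ 2 then p / 2 * t / ε ^ (2 - p) + (1 - p / 2) * ε ^ p
  else t ^ (p / 2)

/-- The derivative `ψ_ε'(t) = (p/2)·min(ε^{p−2}, t^{(p−2)/2})` of `ψ_ε` (for `ε > 0`);
since `t^{(p−2)/2} ≥ ε^{p−2}` precisely for `0 ≤ t ≤ ε²`, the minimum is the first
entry on `[0, ε²)` and the second one on `[ε², ∞)`. -/
noncomputable def psiDeriv (p ε t : ℝ) : ℝ :=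
  if t < ε ^ 2 then p / 2 * ε ^ (p - 2) else p / 2 * t ^ ((p - 2) / 2)

/-- `φ_ε(w) = β ∫_Ω ψ_ε(w(x)²) dx + (α/2)‖w‖²` on `L²(Ω)`. -/
noncomputable def phiEps {d : ℕ} (Ω : Set (EuclideanSpace ℝ (Fin d)))
    (p ε β α : ℝ) (w : Lp ℝ 2 (volume.restrict Ω)) : ℝ :=
  β * ∫ x, psi p ε (w x ^ 2) ∂(volume.restrict Ω) + α / 2 * ‖w‖ ^ 2

section Psi

variable {p ε : ℝ}

lemma rpow_le_rpow_add_mul_sub {r s t : ℝ} (hr0 : 0 ≤ r) (hr1 : r ≤ 1) (hs : 0 ≤ s)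
    (ht : 0 < t) : s ^ r ≤ t ^ r + r * t ^ (r - 1) * (s - t) := by
  have h := rpow_one_add_le_one_add_mul_self (s := s / t - 1)
    (by linarith [div_nonneg hs ht.le]) hr0 hr1
  rw [add_sub_cancel, Real.div_rpow hs ht.le, div_le_iff₀ (by positivity)] at h
  rw [Real.rpow_sub_one ht.ne']
  calc s ^ r ≤ (1 + r * (s / t - 1)) * t ^ r := h
    _ = t ^ r + r * (t ^ r / t) * (s - t) := by field_simp

lemma sq_rpow_div_two (hε : 0 ≤ ε) (x : ℝ) : (ε ^ 2) ^ (x / 2) = ε ^ x := by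
  rw [← Real.rpow_natCast, ← Real.rpow_mul hε]
  ring_nf

lemma psi_of_lt {t : ℝ} (ht : t < ε ^ 2) (hε : 0 < ε) :
    psi p ε t = ε ^ p + p / 2 * ε ^ (p - 2) * (t - ε ^ 2) := by
  rw [psi, if_pos ht, Real.rpow_sub hε, Real.rpow_sub hε, Real.rpow_two]
  field_simp
  ring

lemma psi_of_le {t : ℝ} (ht : ε ^ 2 ≤ t) : psi p ε t = t ^ (p / 2) := by
  rw [psi, if_neg ht.not_gt]

lemma psiDeriv_of_lt {t : ℝ} (ht : t < ε ^ 2) : psiDeriv p ε t = p / 2 * ε ^ (p - 2) := by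
  rw [psiDeriv, if_pos ht]

lemma psiDeriv_of_le {t : ℝ} (ht : ε ^ 2 ≤ t) : psiDeriv p ε t = p / 2 * t ^ ((p - 2) / 2) := by
  rw [psiDeriv, if_neg ht.not_gt]

lemma psiDeriv_le (hp0 : 0 ≤ p) (hp2 : p ≤ 2) (hε : 0 < ε) (t : ℝ) :
    psiDeriv p ε t ≤ p / 2 * ε ^ (p - 2) := by
  rcases lt_or_ge t (ε ^ 2) with ht | ht
  · rw [psiDeriv_of_lt ht]
  · rw [psiDeriv_of_le ht, ← sq_rpow_div_two hε.le]
    exact mul_le_mul_of_nonneg_left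
      (Real.rpow_le_rpow_of_nonpos (by positivity) ht (by linarith)) (by linarith)

lemma psi_nonneg (hp0 : 0 ≤ p) (hp2 : p ≤ 2) (hε : 0 < ε) {t : ℝ} (ht : 0 ≤ t) : 0 ≤ psi p ε t := by
  unfold psi
  split_ifs
  · exact add_nonneg (div_nonneg (mul_nonneg (by linarith) ht) (by positivity))
      (mul_nonneg (by linarith) (by positivity))
  · exact Real.rpow_nonneg ht _

lemma psiDeriv_sq (hε : 0 < ε) (x : ℝ) : psiDeriv p ε (x ^ 2) = p / 2 * max |x| ε ^ (p - 2) := by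
  rcases lt_or_ge |x| ε with hx | hx
  · rw [psiDeriv_of_lt (sq_lt_sq.2 (by rwa [abs_of_pos hε])), max_eq_right hx.le]
  · rw [psiDeriv_of_le (sq_le_sq.2 (by rwa [abs_of_pos hε])), max_eq_left hx, ← sq_abs,
      sq_rpow_div_two (abs_nonneg x)]

lemma psi_sq_of_le (hε : 0 < ε) {x : ℝ} (hx : ε ≤ |x|) : psi p ε (x ^ 2) = |x| ^ p := by
  rw [psi_of_le (sq_le_sq.2 (by rwa [abs_of_pos hε])), ← sq_abs, sq_rpow_div_two (abs_nonneg x)]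

lemma psi_le_add_psiDeriv_mul_sub (hp0 : 0 ≤ p) (hp2 : p ≤ 2) (hε : 0 < ε) {s t : ℝ}
    (hs : 0 ≤ s) : psi p ε s ≤ psi p ε t + psiDeriv p ε t * (s - t) := by
  have tangent : ∀ {s t : ℝ}, 0 ≤ s → ε ^ 2 ≤ t →
      s ^ (p / 2) ≤ t ^ (p / 2) + p / 2 * t ^ ((p - 2) / 2) * (s - t) := by
    intro s t hs ht
    have h := rpow_le_rpow_add_mul_sub (r := p / 2) (by linarith) (by linarith) hs
      (lt_of_lt_of_le (by positivity) ht)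
    rwa [show p / 2 - 1 = (p - 2) / 2 by ring] at h
  rcases lt_or_ge t (ε ^ 2) with ht | ht
  · rw [psi_of_lt ht hε, psiDeriv_of_lt ht]
    rcases lt_or_ge s (ε ^ 2) with hs' | hs'
    · rw [psi_of_lt hs' hε]
      exact le_of_eq (by ring)
    · have h := tangent hs le_rfl
      rw [sq_rpow_div_two hε.le, sq_rpow_div_two hε.le] at h
      rw [psi_of_le hs']
      linarith
  · rw [psi_of_le ht, psiDeriv_of_le ht]
    rcases le_or_gt (ε ^ 2) s with hs' | hs'
    · rw [psi_of_le hs']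
      exact tangent hs ht
    · -- The linear branch is the tangent at `ε²`; to the left of `ε²`, tangents of a concave
      -- function at points `t ≥ ε²` lie above it.
      have h1 := tangent (sq_nonneg ε) ht
      have h2 := psiDeriv_of_le ht ▸ psiDeriv_le hp0 hp2 hε t
      rw [sq_rpow_div_two hε.le] at h1
      rw [psi_of_lt hs' hε]
      nlinarith [mul_le_mul_of_nonneg_right h2 (by linarith : 0 ≤ ε ^ 2 - s)]

end Psi

-- With `c₀ = 1/(2r)`, `c₁ = β`, `c₂ = α/2` and `q = (u - r g)(x)`, these are the integrands
-- at `x` of the functional minimized by `v` and of its linearization at `a = u(x)`.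
noncomputable def proxIntegrand (p ε c₀ c₁ c₂ q y : ℝ) : ℝ :=
  c₀ * (y - q) ^ 2 + c₁ * psi p ε (y ^ 2) + c₂ * y ^ 2

noncomputable def proxMajorant (p ε c₀ c₁ c₂ q a y : ℝ) : ℝ :=
  c₀ * (y - q) ^ 2 + c₁ * (psi p ε (a ^ 2) + psiDeriv p ε (a ^ 2) * (y ^ 2 - a ^ 2)) +
    c₂ * y ^ 2

section Stationary

variable {p ε c₀ c₁ c₂ q : ℝ}

lemma proxIntegrand_le_proxMajorant (hp0 : 0 ≤ p) (hp2 : p ≤ 2) (hε : 0 < ε) (hc₁ : 0 ≤ c₁)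
    (a y : ℝ) : proxIntegrand p ε c₀ c₁ c₂ q y ≤ proxMajorant p ε c₀ c₁ c₂ q a y := by
  unfold proxIntegrand proxMajorant
  gcongr
  exact psi_le_add_psiDeriv_mul_sub hp0 hp2 hε (sq_nonneg y)

lemma proxMajorant_self (a : ℝ) :
    proxMajorant p ε c₀ c₁ c₂ q a a = proxIntegrand p ε c₀ c₁ c₂ q a := by
  simp [proxMajorant, proxIntegrand]

-- Only rational shifts can be tested: countably many minimality conditions survive an a.e.
-- quantifier.
lemma le_of_forall_rat_le {f : ℝ → ℝ} (hf : Continuous f) {x : ℝ}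
    (h : ∀ r : ℚ, f x ≤ f (x + r)) (y : ℝ) : f x ≤ f y := by
  have key : f x ≤ f (x + (y - x)) :=
    Rat.denseRange_cast.induction_on (p := fun z => f x ≤ f (x + z)) (y - x)
      (isClosed_le continuous_const (hf.comp (continuous_const.add continuous_id))) h
  simpa using key

lemma psiDeriv_sq_nonneg (hp0 : 0 ≤ p) (hε : 0 < ε) (a : ℝ) : 0 ≤ psiDeriv p ε (a ^ 2) := by
  rw [psiDeriv_sq hε]
  have : 0 ≤ max |a| ε := le_max_of_le_left (abs_nonneg a)
  positivity

lemma mul_eq_of_forall_rat_proxMajorant_le (hp0 : 0 ≤ p) (hε : 0 < ε) (hc₀ : 0 < c₀)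
    (hc₁ : 0 ≤ c₁) (hc₂ : 0 ≤ c₂) {a x : ℝ}
    (h : ∀ r : ℚ, proxMajorant p ε c₀ c₁ c₂ q a x ≤ proxMajorant p ε c₀ c₁ c₂ q a (x + r)) :
    x * (c₀ + c₂ + c₁ * psiDeriv p ε (a ^ 2)) = c₀ * q := by
  set S := c₀ + c₂ + c₁ * psiDeriv p ε (a ^ 2)
  have hS : 0 < S := by have := psiDeriv_sq_nonneg hp0 hε a; positivity
  have hmin := le_of_forall_rat_le (by unfold proxMajorant; fun_prop) h (c₀ * q / S)
  have key : (x * S - c₀ * q) ^ 2 = S * (proxMajorant p ε c₀ c₁ c₂ q a x -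
      proxMajorant p ε c₀ c₁ c₂ q a (c₀ * q / S)) := by
    unfold proxMajorant
    field_simp
    ring
  nlinarith [sq_nonneg (x * S - c₀ * q)]

lemma mul_eq_of_forall_rat_proxIntegrand_le (hp0 : 0 ≤ p) (hp2 : p ≤ 2) (hε : 0 < ε)
    (hc₀ : 0 < c₀) (hc₁ : 0 ≤ c₁) (hc₂ : 0 ≤ c₂) {x : ℝ}
    (h : ∀ r : ℚ, proxIntegrand p ε c₀ c₁ c₂ q x ≤ proxIntegrand p ε c₀ c₁ c₂ q (x + r)) :
    x * (c₀ + c₂ + c₁ * psiDeriv p ε (x ^ 2)) = c₀ * q :=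
  mul_eq_of_forall_rat_proxMajorant_le hp0 hε hc₀ hc₁ hc₂ fun r => by
    rw [proxMajorant_self]
    exact (h r).trans (proxIntegrand_le_proxMajorant hp0 hp2 hε hc₁ x _)

end Stationary

section Comparison

variable {p ε c₀ c₁ c₂ q : ℝ}

lemma sq_mul_abs_rpow_sub_le (hp0 : 0 ≤ p) (hp2 : p ≤ 2) {m n : ℝ} (hm : 0 < m) (hn : 0 < n) :
    m ^ 2 * |m ^ (p - 2) - n ^ (p - 2)| ≤ n ^ (p - 2) * |n ^ 2 - m ^ 2| := by
  have hpow : ∀ {x : ℝ}, 0 < x → x ^ (p - 2) * x ^ 2 = x ^ p := fun hx => by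
    rw [← Real.rpow_natCast, ← Real.rpow_add hx]
    norm_num
  rcases le_total m n with h | h
  · have hmn := Real.rpow_le_rpow_of_nonpos hm h (by linarith : p - 2 ≤ 0)
    rw [abs_of_nonneg (by linarith), abs_of_nonneg (by nlinarith)]
    nlinarith [hpow hm, hpow hn, Real.rpow_le_rpow hm.le h hp0]
  · have hmn := Real.rpow_le_rpow_of_nonpos hn h (by linarith : p - 2 ≤ 0)
    rw [abs_of_nonpos (by linarith), abs_of_nonpos (by nlinarith)]
    nlinarith [hpow hm, hpow hn, Real.rpow_le_rpow hn.le h hp0]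

lemma mul_abs_sub_le_of_mul_add_eq {A θv θa mv ma v w : ℝ} (hA : 0 < A) (hθa : 0 ≤ θa)
    (hv0 : 0 ≤ v) (hvm : v ≤ mv) (hθ : mv ^ 2 * |θv - θa| ≤ θa * |ma ^ 2 - mv ^ 2|)
    (heq : w * (A + θa) = v * (A + θv)) : mv * |w - v| ≤ |ma ^ 2 - mv ^ 2| := by
  have hgap : |w - v| * (A + θa) = v * |θv - θa| := by
    rw [← abs_of_nonneg (by positivity : 0 ≤ A + θa), ← abs_of_nonneg hv0, ← abs_mul,
      ← abs_mul, abs_of_nonneg hv0]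
    congr 1
    linear_combination heq
  have hmv : 0 ≤ mv := hv0.trans hvm
  have key : mv * |w - v| * (A + θa) ≤ |ma ^ 2 - mv ^ 2| * (A + θa) := by
    calc mv * |w - v| * (A + θa) = mv * v * |θv - θa| := by rw [mul_assoc, hgap, mul_assoc]
      _ ≤ mv ^ 2 * |θv - θa| := by gcongr; nlinarith
      _ ≤ θa * |ma ^ 2 - mv ^ 2| := hθ
      _ ≤ |ma ^ 2 - mv ^ 2| * (A + θa) := by nlinarith [abs_nonneg (ma ^ 2 - mv ^ 2)]
  exact le_of_mul_le_mul_right key (by positivity)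

lemma mul_sub_le_of_proxIntegrand_le (hp0 : 0 < p) (hp1 : p ≤ 1) (hε : 0 < ε) (hc₀ : 0 ≤ c₀)
    (hc₁ : 0 < c₁) (hc₂ : 0 ≤ c₂) {m v w : ℝ} (hεm : ε ≤ m) (hmw : m ≤ w)
    (hw : w * (c₀ + c₂ + c₁ * (p / 2 * m ^ (p - 2))) = c₀ * q)
    (hF : proxIntegrand p ε c₀ c₁ c₂ q v ≤ proxIntegrand p ε c₀ c₁ c₂ q w) :
    p * (w - v) ≤ m := by
  have hm : 0 < m := hε.trans_le hεm
  have hw0 : 0 < w := hm.trans_le hmw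
  set θ := c₁ * (p / 2 * m ^ (p - 2))
  have hψv := psi_nonneg hp0.le (by linarith) hε (sq_nonneg v)
  rw [proxIntegrand, proxIntegrand, psi_sq_of_le (x := w) hε (by rw [abs_of_pos hw0]; linarith),
    abs_of_pos hw0] at hF
  have hdiff : c₀ * (v - q) ^ 2 - c₀ * (w - q) ^ 2 + c₂ * (v ^ 2 - w ^ 2) =
      (w - v) * ((c₀ + c₂) * (w - v) + 2 * w * θ) := by
    linear_combination 2 * (v - w) * hw
  have hstar : (w - v) * (2 * w) * θ ≤ c₁ * w ^ p := by
    nlinarith [mul_nonneg (add_nonneg hc₀ hc₂) (sq_nonneg (w - v)), mul_nonneg hc₁.le hψv]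
  have hwp : w ^ p ≤ w * (m ^ (p - 2) * m) := by
    have e1 : w ^ p = w * w ^ (p - 1) := by
      rw [Real.rpow_sub_one hw0.ne']
      field_simp
    have e2 : m ^ (p - 2) * m = m ^ (p - 1) := by
      rw [← Real.rpow_add_one hm.ne']
      ring_nf
    rw [e1, e2]
    exact mul_le_mul_of_nonneg_left (Real.rpow_le_rpow_of_nonpos hm hmw (by linarith)) hw0.le
  refine le_of_mul_le_mul_left ?_ (by positivity : 0 < c₁ * w * m ^ (p - 2))
  calc c₁ * w * m ^ (p - 2) * (p * (w - v)) = (w - v) * (2 * w) * θ := by ring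
    _ ≤ c₁ * w ^ p := hstar
    _ ≤ c₁ * (w * (m ^ (p - 2) * m)) := by gcongr
    _ = c₁ * w * m ^ (p - 2) * m := by ring

lemma abs_sub_le_of_proxIntegrand_le_of_nonneg (hp0 : 0 < p) (hp1 : p ≤ 1) (hε : 0 < ε)
    (hc₀ : 0 < c₀) (hc₁ : 0 < c₁) (hc₂ : 0 ≤ c₂) (hq : 0 ≤ q) {a v w : ℝ}
    (hv : v * (c₀ + c₂ + c₁ * psiDeriv p ε (v ^ 2)) = c₀ * q)
    (hw : w * (c₀ + c₂ + c₁ * psiDeriv p ε (a ^ 2)) = c₀ * q)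
    (hF : proxIntegrand p ε c₀ c₁ c₂ q v ≤ proxIntegrand p ε c₀ c₁ c₂ q w) :
    |w - v| ≤ (3 + 2 / p) * |max |v| ε - max |a| ε| := by
  rw [psiDeriv_sq hε] at hv hw
  set mv := max |v| ε
  set ma := max |a| ε
  have hmv : 0 < mv := hε.trans_le (le_max_right _ _)
  have hma : 0 < ma := hε.trans_le (le_max_right _ _)
  have hvm : v ≤ mv := (le_abs_self v).trans (le_max_left _ _)
  have hv0 : 0 ≤ v := nonneg_of_mul_nonneg_left (by rw [hv]; positivity) (by positivity)
  have hw0 : 0 ≤ w := nonneg_of_mul_nonneg_left (by rw [hw]; positivity) (by positivity)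
  have hgap : mv * |w - v| ≤ |ma ^ 2 - mv ^ 2| := by
    refine mul_abs_sub_le_of_mul_add_eq (by positivity) (by positivity) hv0 hvm ?_
      (hw.trans hv.symm)
    rw [← mul_sub, abs_mul, abs_of_pos hc₁, ← mul_sub, abs_mul, abs_of_pos (half_pos hp0)]
    have hθ := sq_mul_abs_rpow_sub_le hp0.le (by linarith) hmv hma
    have hc : 0 < c₁ * (p / 2) := by positivity
    nlinarith
  have hK : 0 ≤ 2 / p := by positivity
  rcases le_or_gt ma mv with hm | hm
  · have : |w - v| ≤ 2 * (mv - ma) := by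
      rw [abs_of_nonpos (by nlinarith : ma ^ 2 - mv ^ 2 ≤ 0)] at hgap
      nlinarith
    rw [abs_of_nonneg (by linarith : 0 ≤ mv - ma)]
    nlinarith
  rw [abs_of_nonpos (by linarith : mv - ma ≤ 0), neg_sub]
  rcases le_or_gt ma (2 * mv) with hm2 | hm2
  · have : |w - v| ≤ 3 * (ma - mv) := by
      rw [abs_of_nonneg (by nlinarith : 0 ≤ ma ^ 2 - mv ^ 2)] at hgap
      nlinarith
    nlinarith
  rcases le_or_gt w ma with hwm | hwm
  · have : |w - v| ≤ ma := abs_sub_le_iff.2 ⟨by linarith, by linarith⟩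
    nlinarith
  · have hstar := mul_sub_le_of_proxIntegrand_le hp0 hp1 hε hc₀.le hc₁ hc₂ (le_max_right _ _)
      hwm.le hw hF
    have : w - v ≤ 2 / p * (ma - mv) := by
      rw [div_mul_eq_mul_div, le_div_iff₀ hp0]
      linarith
    rw [abs_of_pos (by linarith : 0 < w - v)]
    linarith

lemma proxIntegrand_neg (y : ℝ) :
    proxIntegrand p ε c₀ c₁ c₂ (-q) (-y) = proxIntegrand p ε c₀ c₁ c₂ q y := by
  simp only [proxIntegrand, neg_sq]
  ring

lemma abs_sub_le_of_proxIntegrand_le (hp0 : 0 < p) (hp1 : p ≤ 1) (hε : 0 < ε) (hc₀ : 0 < c₀)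
    (hc₁ : 0 < c₁) (hc₂ : 0 ≤ c₂) {a v w : ℝ}
    (hv : v * (c₀ + c₂ + c₁ * psiDeriv p ε (v ^ 2)) = c₀ * q)
    (hw : w * (c₀ + c₂ + c₁ * psiDeriv p ε (a ^ 2)) = c₀ * q)
    (hF : proxIntegrand p ε c₀ c₁ c₂ q v ≤ proxIntegrand p ε c₀ c₁ c₂ q w) :
    |w - a| ≤ (4 + 2 / p) * |v - a| := by
  have hgap : |w - v| ≤ (3 + 2 / p) * |max |v| ε - max |a| ε| := by
    rcases le_total 0 q with hq | hq
    · exact abs_sub_le_of_proxIntegrand_le_of_nonneg hp0 hp1 hε hc₀ hc₁ hc₂ hq hv hw hF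
    · have h := abs_sub_le_of_proxIntegrand_le_of_nonneg hp0 hp1 hε hc₀ hc₁ hc₂
        (neg_nonneg.2 hq) (a := -a) (v := -v) (w := -w)
        (by rw [neg_sq]; linear_combination -hv) (by rw [neg_sq]; linear_combination -hw)
        (by rwa [proxIntegrand_neg, proxIntegrand_neg])
      rwa [abs_neg, abs_neg, neg_sub_neg, abs_sub_comm] at h
  have hlip : |max |v| ε - max |a| ε| ≤ |v - a| :=
    (abs_max_sub_max_le_abs _ _ _).trans (abs_abs_sub_abs_le_abs_sub _ _)
  calc |w - a| ≤ |w - v| + |v - a| := abs_sub_le _ _ _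
    _ ≤ (3 + 2 / p) * |v - a| + |v - a| := by gcongr; exact hgap.trans (by gcongr)
    _ = (4 + 2 / p) * |v - a| := by ring

end Comparison

lemma inner_add_sub_le_of_prox_le {E : Type*} [NormedAddCommGroup E] [InnerProductSpace ℝ E]
    {φ : E → ℝ} {r : ℝ} (hr : r ≠ 0) {u g v : E}
    (hv : 1 / (2 * r) * ‖v - (u - r • g)‖ ^ 2 + φ v ≤ 1 / (2 * r) * ‖u - (u - r • g)‖ ^ 2 + φ u) :
    ⟪g, v - u⟫ + φ v - φ u ≤ -(1 / (2 * r)) * ‖v - u‖ ^ 2 := by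
  rw [show v - (u - r • g) = (v - u) + r • g by abel, sub_sub_cancel, norm_add_sq_real,
    real_inner_smul_right, real_inner_comm, norm_smul, mul_pow, Real.norm_eq_abs, sq_abs] at hv
  have e : 1 / (2 * r) * (‖v - u‖ ^ 2 + 2 * (r * ⟪g, v - u⟫) + r ^ 2 * ‖g‖ ^ 2) =
      1 / (2 * r) * ‖v - u‖ ^ 2 + ⟪g, v - u⟫ + 1 / (2 * r) * (r ^ 2 * ‖g‖ ^ 2) := by
    field_simp
  linarith

section Integral

variable {X : Type*} [MeasurableSpace X] {μ : Measure X} {p ε c₀ c₁ c₂ : ℝ}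

lemma measurable_psi : Measurable (psi p ε) :=
  Measurable.ite (measurableSet_lt measurable_id measurable_const) (by fun_prop) (by fun_prop)

lemma measurable_psiDeriv : Measurable (psiDeriv p ε) :=
  Measurable.ite (measurableSet_lt measurable_id measurable_const) (by fun_prop) (by fun_prop)

lemma integrable_psi_sq [IsFiniteMeasure μ] (hp0 : 0 ≤ p) (hp2 : p ≤ 2) (hε : 0 < ε)
    {f : X → ℝ} (hf : MemLp f 2 μ) : Integrable (fun x => psi p ε (f x ^ 2)) μ := by
  refine ((integrable_const (psi p ε 0)).add (hf.integrable_sq.const_mul (psiDeriv p ε 0))).mono'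
    (measurable_psi.comp_aemeasurable (hf.aemeasurable.pow_const 2)).aestronglyMeasurable
    (ae_of_all _ fun x => ?_)
  rw [Real.norm_eq_abs, abs_of_nonneg (psi_nonneg hp0 hp2 hε (sq_nonneg _))]
  simpa using psi_le_add_psiDeriv_mul_sub hp0 hp2 hε (t := 0) (sq_nonneg (f x))

lemma integrable_psiDeriv_sq_mul (hp0 : 0 ≤ p) (hp2 : p ≤ 2) (hε : 0 < ε) {f g : X → ℝ}
    (hf : AEMeasurable f μ) (hg : Integrable g μ) :
    Integrable (fun x => psiDeriv p ε (f x ^ 2) * g x) μ :=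
  hg.bdd_mul (measurable_psiDeriv.comp_aemeasurable (hf.pow_const 2)).aestronglyMeasurable
    (ae_of_all _ fun x => by
      rw [Real.norm_eq_abs, abs_of_nonneg (psiDeriv_sq_nonneg hp0 hε _)]
      exact psiDeriv_le hp0 hp2 hε _)

lemma integrable_proxIntegrand [IsFiniteMeasure μ] (hp0 : 0 ≤ p) (hp2 : p ≤ 2) (hε : 0 < ε)
    {b f : X → ℝ} (hb : MemLp b 2 μ) (hf : MemLp f 2 μ) :
    Integrable (fun x => proxIntegrand p ε c₀ c₁ c₂ (b x) (f x)) μ :=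
  ((((hf.sub hb).integrable_sq).const_mul c₀).add
    ((integrable_psi_sq hp0 hp2 hε hf).const_mul c₁)).add (hf.integrable_sq.const_mul c₂)

lemma integrable_proxMajorant [IsFiniteMeasure μ] (hp0 : 0 ≤ p) (hp2 : p ≤ 2) (hε : 0 < ε)
    {b a f : X → ℝ} (hb : MemLp b 2 μ) (ha : MemLp a 2 μ) (hf : MemLp f 2 μ) :
    Integrable (fun x => proxMajorant p ε c₀ c₁ c₂ (b x) (a x) (f x)) μ :=
  ((((hf.sub hb).integrable_sq).const_mul c₀).add
    (((integrable_psi_sq hp0 hp2 hε ha).add (integrable_psiDeriv_sq_mul hp0 hp2 hε ha.aemeasurable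
      (hf.integrable_sq.sub ha.integrable_sq))).const_mul c₁)).add
    (hf.integrable_sq.const_mul c₂)

lemma MeasureTheory.L2.norm_sq_eq_integral (f : Lp ℝ 2 μ) : ‖f‖ ^ 2 = ∫ x, f x ^ 2 ∂μ := by
  rw [← real_inner_self_eq_norm_sq, L2.inner_def]
  simp [sq]

lemma MeasureTheory.L2.norm_sub_sq_eq_integral (f g : Lp ℝ 2 μ) :
    ‖f - g‖ ^ 2 = ∫ x, (f x - g x) ^ 2 ∂μ := by
  rw [L2.norm_sq_eq_integral]
  exact integral_congr_ae ((Lp.coeFn_sub f g).mono fun x hx => by simp only [hx, Pi.sub_apply])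

lemma integral_proxIntegrand [IsFiniteMeasure μ] (hp0 : 0 ≤ p) (hp2 : p ≤ 2) (hε : 0 < ε)
    (b f : Lp ℝ 2 μ) :
    ∫ x, proxIntegrand p ε c₀ c₁ c₂ (b x) (f x) ∂μ =
      c₀ * ‖f - b‖ ^ 2 + c₁ * ∫ x, psi p ε (f x ^ 2) ∂μ + c₂ * ‖f‖ ^ 2 := by
  have hf := Lp.memLp f
  have i₀ : Integrable (fun x => c₀ * (f x - b x) ^ 2) μ :=
    ((hf.sub (Lp.memLp b)).integrable_sq).const_mul c₀
  have i₁ : Integrable (fun x => c₁ * psi p ε (f x ^ 2)) μ :=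
    (integrable_psi_sq hp0 hp2 hε hf).const_mul c₁
  have i₂ : Integrable (fun x => c₂ * f x ^ 2) μ := hf.integrable_sq.const_mul c₂
  have i₀₁ : Integrable (fun x => c₀ * (f x - b x) ^ 2 + c₁ * psi p ε (f x ^ 2)) μ := i₀.add i₁
  rw [L2.norm_sub_sq_eq_integral, L2.norm_sq_eq_integral, ← integral_const_mul,
    ← integral_const_mul, ← integral_const_mul, ← integral_add i₀ i₁, ← integral_add i₀₁ i₂]
  rfl

lemma integral_proxMajorant [IsFiniteMeasure μ] (hp0 : 0 ≤ p) (hp2 : p ≤ 2) (hε : 0 < ε)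
    (b a f : Lp ℝ 2 μ) :
    ∫ x, proxMajorant p ε c₀ c₁ c₂ (b x) (a x) (f x) ∂μ =
      c₀ * ‖f - b‖ ^ 2 +
        c₁ * ∫ x, (psi p ε (a x ^ 2) + psiDeriv p ε (a x ^ 2) * (f x ^ 2 - a x ^ 2)) ∂μ +
        c₂ * ‖f‖ ^ 2 := by
  have hf := Lp.memLp f
  have ha := Lp.memLp a
  have i₀ : Integrable (fun x => c₀ * (f x - b x) ^ 2) μ :=
    ((hf.sub (Lp.memLp b)).integrable_sq).const_mul c₀
  have i₁ : Integrable (fun x => c₁ * (psi p ε (a x ^ 2) +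
      psiDeriv p ε (a x ^ 2) * (f x ^ 2 - a x ^ 2))) μ :=
    ((integrable_psi_sq hp0 hp2 hε ha).add (integrable_psiDeriv_sq_mul hp0 hp2 hε
      ha.aemeasurable (hf.integrable_sq.sub ha.integrable_sq))).const_mul c₁
  have i₂ : Integrable (fun x => c₂ * f x ^ 2) μ := hf.integrable_sq.const_mul c₂
  have i₀₁ : Integrable (fun x => c₀ * (f x - b x) ^ 2 + c₁ * (psi p ε (a x ^ 2) +
      psiDeriv p ε (a x ^ 2) * (f x ^ 2 - a x ^ 2))) μ := i₀.add i₁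
  rw [L2.norm_sub_sq_eq_integral, L2.norm_sq_eq_integral, ← integral_const_mul,
    ← integral_const_mul, ← integral_const_mul, ← integral_add i₀ i₁, ← integral_add i₀₁ i₂]
  rfl

lemma ae_le_of_forall_integral_le {r : ℝ≥0∞} {φ : X → ℝ → ℝ} {v : Lp ℝ r μ}
    (hint : ∀ f : Lp ℝ r μ, Integrable (fun x => φ x (f x)) μ)
    (hmin : ∀ f : Lp ℝ r μ, ∫ x, φ x (v x) ∂μ ≤ ∫ x, φ x (f x) ∂μ)
    {g : X → ℝ} (hg : MemLp g r μ) : ∀ᵐ x ∂μ, φ x (v x) ≤ φ x (g x) := by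
  classical
  have hmin' : ∀ f : X → ℝ, MemLp f r μ →
      Integrable (fun x => φ x (f x)) μ ∧ ∫ x, φ x (v x) ∂μ ≤ ∫ x, φ x (f x) ∂μ := by
    intro f hf
    have hae : ∀ᵐ x ∂μ, φ x (hf.toLp f x) = φ x (f x) :=
      hf.coeFn_toLp.mono fun x hx => by rw [hx]
    exact ⟨(hint _).congr hae, (hmin _).trans_eq (integral_congr_ae hae)⟩
  have hvi := hint v
  have hgi := (hmin' g hg).1
  refine ae_le_of_forall_setIntegral_le hvi hgi fun S hS _ => ?_
  -- test `v` against the function equal to `g` on `S` and to `v` off `S`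
  have h := (hmin' (S.piecewise g v) ((hg.restrict S).piecewise hS ((Lp.memLp v).restrict _))).2
  have e : (fun x => φ x (S.piecewise g v x)) =
      S.piecewise (fun x => φ x (g x)) (fun x => φ x (v x)) := by
    ext x
    by_cases hx : x ∈ S <;> simp [hx]
  rw [e, integral_piecewise hS hgi.integrableOn hvi.integrableOn, ← integral_add_compl hS hvi] at h
  linarith

lemma norm_sub_le_of_prox_minimizers [IsFiniteMeasure μ] (hp0 : 0 < p) (hp1 : p ≤ 1) (hε : 0 < ε)
    (hc₀ : 0 < c₀) (hc₁ : 0 < c₁) (hc₂ : 0 ≤ c₂) {u b v w : Lp ℝ 2 μ}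
    (hv : ∀ f : Lp ℝ 2 μ, ∫ x, proxIntegrand p ε c₀ c₁ c₂ (b x) (v x) ∂μ ≤
      ∫ x, proxIntegrand p ε c₀ c₁ c₂ (b x) (f x) ∂μ)
    (hw : ∀ f : Lp ℝ 2 μ, ∫ x, proxMajorant p ε c₀ c₁ c₂ (b x) (u x) (w x) ∂μ ≤
      ∫ x, proxMajorant p ε c₀ c₁ c₂ (b x) (u x) (f x) ∂μ) :
    ‖w - u‖ ≤ (4 + 2 / p) * ‖v - u‖ := by
  have hp2 : p ≤ 2 := by linarith
  have hF := fun f : Lp ℝ 2 μ => integrable_proxIntegrand (c₀ := c₀) (c₁ := c₁) (c₂ := c₂)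
    hp0.le hp2 hε (Lp.memLp b) (Lp.memLp f)
  have hM := fun f : Lp ℝ 2 μ => integrable_proxMajorant (c₀ := c₀) (c₁ := c₁) (c₂ := c₂)
    hp0.le hp2 hε (Lp.memLp b) (Lp.memLp u) (Lp.memLp f)
  have hv_shift : ∀ᵐ x ∂μ, ∀ r : ℚ, proxIntegrand p ε c₀ c₁ c₂ (b x) (v x) ≤
      proxIntegrand p ε c₀ c₁ c₂ (b x) (v x + r) :=
    ae_all_iff.2 fun r => ae_le_of_forall_integral_le hF hv ((Lp.memLp v).add (memLp_const _))
  have hw_shift : ∀ᵐ x ∂μ, ∀ r : ℚ, proxMajorant p ε c₀ c₁ c₂ (b x) (u x) (w x) ≤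
      proxMajorant p ε c₀ c₁ c₂ (b x) (u x) (w x + r) :=
    ae_all_iff.2 fun r => ae_le_of_forall_integral_le hM hw ((Lp.memLp w).add (memLp_const _))
  have hvw := ae_le_of_forall_integral_le hF hv (Lp.memLp w)
  refine Lp.norm_le_mul_norm_of_ae_le_mul ?_
  filter_upwards [hv_shift, hw_shift, hvw, Lp.coeFn_sub w u, Lp.coeFn_sub v u]
    with x hv_x hw_x hvw_x hwu hvu
  rw [hwu, hvu, Pi.sub_apply, Pi.sub_apply, Real.norm_eq_abs, Real.norm_eq_abs]
  exact abs_sub_le_of_proxIntegrand_le hp0 hp1 hε hc₀ hc₁ hc₂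
    (mul_eq_of_forall_rat_proxIntegrand_le hp0.le hp2 hε hc₀ hc₁.le hc₂ hv_x)
    (mul_eq_of_forall_rat_proxMajorant_le hp0.le hε hc₀ hc₁.le hc₂ hw_x) hvw_x

end Integral

theorem prox_decrease_chain_general
    {d : ℕ} (Ω : Set (EuclideanSpace ℝ (Fin d)))
    (hΩ_bdd : Bornology.IsBounded Ω)
    (p ε β α r : ℝ) (hp0 : 0 < p) (hp1 : p < 1) (hε : 0 < ε) (hβ : 0 < β)
    (hα : 0 ≤ α) (hr : 0 < r)
    (u g v wstar : Lp ℝ 2 (volume.restrict Ω))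
    (hv : ∀ w : Lp ℝ 2 (volume.restrict Ω),
      1 / (2 * r) * ‖v - (u - r • g)‖ ^ 2 + phiEps Ω p ε β α v ≤
        1 / (2 * r) * ‖w - (u - r • g)‖ ^ 2 + phiEps Ω p ε β α w)
    (hwstar : ∀ w : Lp ℝ 2 (volume.restrict Ω),
      1 / (2 * r) * ‖wstar - (u - r • g)‖ ^ 2 +
          β * ∫ x, (psi p ε (u x ^ 2) + psiDeriv p ε (u x ^ 2) * (wstar x ^ 2 - u x ^ 2))
            ∂(volume.restrict Ω) + α / 2 * ‖wstar‖ ^ 2 ≤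
        1 / (2 * r) * ‖w - (u - r • g)‖ ^ 2 +
          β * ∫ x, (psi p ε (u x ^ 2) + psiDeriv p ε (u x ^ 2) * (w x ^ 2 - u x ^ 2))
            ∂(volume.restrict Ω) + α / 2 * ‖w‖ ^ 2) :
    (⟪g, v - u⟫ : ℝ) + phiEps Ω p ε β α v - phiEps Ω p ε β α u ≤
        -(1 / (2 * r)) * ‖v - u‖ ^ 2 ∧
      -(1 / (2 * r)) * ‖v - u‖ ^ 2 ≤
        -(1 / (2 * r * (4 + 2 / p) ^ 2)) * ‖wstar - u‖ ^ 2 := by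
  have : IsFiniteMeasure (volume.restrict Ω) := ⟨by simpa using hΩ_bdd.measure_lt_top⟩
  have hp2 : p ≤ 2 := by linarith
  refine ⟨inner_add_sub_le_of_prox_le hr.ne' (hv u), ?_⟩
  have hK : ‖wstar - u‖ ≤ (4 + 2 / p) * ‖v - u‖ := by
    refine norm_sub_le_of_prox_minimizers hp0 hp1.le hε (by positivity : 0 < 1 / (2 * r)) hβ
      (by positivity : 0 ≤ α / 2) (b := u - r • g) (fun f => ?_) (fun f => ?_)
    · rw [integral_proxIntegrand hp0.le hp2 hε, integral_proxIntegrand hp0.le hp2 hε]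
      have := hv f
      simp only [phiEps] at this
      linarith
    · rw [integral_proxMajorant hp0.le hp2 hε, integral_proxMajorant hp0.le hp2 hε]
      exact hwstar f
  have hK2 : ‖wstar - u‖ ^ 2 ≤ (4 + 2 / p) ^ 2 * ‖v - u‖ ^ 2 := by
    rw [← mul_pow]
    exact pow_le_pow_left₀ (norm_nonneg _) hK 2
  rw [neg_mul, neg_mul, neg_le_neg_iff]
  calc 1 / (2 * r * (4 + 2 / p) ^ 2) * ‖wstar - u‖ ^ 2
      ≤ 1 / (2 * r * (4 + 2 / p) ^ 2) * ((4 + 2 / p) ^ 2 * ‖v - u‖ ^ 2) := by gcongr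
    _ = 1 / (2 * r) * ‖v - u‖ ^ 2 := by field_simp

/-- if `v` globally minimizes `w ↦ (1/(2r))‖w − (u − r g)‖² + φ_ε(w)` and
`w*` globally minimizes the convexified functional at `u`, then
`(g, v − u) + φ_ε(v) − φ_ε(u) ≤ −(1/(2r))‖v − u‖² ≤ −(1/(2r(4 + 2/p)²))‖w* − u‖²`. -/
theorem prox_decrease_chain
    {d : ℕ} (hd : 1 ≤ d) (Ω : Set (EuclideanSpace ℝ (Fin d)))
    (hΩ_open : IsOpen Ω) (hΩ_conn : IsConnected Ω) (hΩ_bdd : Bornology.IsBounded Ω)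
    (p ε β α r : ℝ) (hp0 : 0 < p) (hp1 : p < 1) (hε : 0 < ε) (hβ : 0 < β)
    (hα : 0 ≤ α) (hr : 0 < r)
    (u g v wstar : Lp ℝ 2 (volume.restrict Ω))
    (hv : ∀ w : Lp ℝ 2 (volume.restrict Ω),
      1 / (2 * r) * ‖v - (u - r • g)‖ ^ 2 + phiEps Ω p ε β α v ≤
        1 / (2 * r) * ‖w - (u - r • g)‖ ^ 2 + phiEps Ω p ε β α w)
    (hwstar : ∀ w : Lp ℝ 2 (volume.restrict Ω),
      1 / (2 * r) * ‖wstar - (u - r • g)‖ ^ 2 +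
          β * ∫ x, (psi p ε (u x ^ 2) + psiDeriv p ε (u x ^ 2) * (wstar x ^ 2 - u x ^ 2))
            ∂(volume.restrict Ω) + α / 2 * ‖wstar‖ ^ 2 ≤
        1 / (2 * r) * ‖w - (u - r • g)‖ ^ 2 +
          β * ∫ x, (psi p ε (u x ^ 2) + psiDeriv p ε (u x ^ 2) * (w x ^ 2 - u x ^ 2))
            ∂(volume.restrict Ω) + α / 2 * ‖w‖ ^ 2) :
    (⟪g, v - u⟫ : ℝ) + phiEps Ω p ε β α v - phiEps Ω p ε β α u ≤
        -(1 / (2 * r)) * ‖v - u‖ ^ 2 ∧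
      -(1 / (2 * r)) * ‖v - u‖ ^ 2 ≤
        -(1 / (2 * r * (4 + 2 / p) ^ 2)) * ‖wstar - u‖ ^ 2 :=
  prox_decrease_chain_general Ω hΩ_bdd p ε β α r hp0 hp1 hε hβ hα hr u g v wstar hv hwstar
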